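/- arXiv:2303.10392 — 3 statements merged into one kernel-verified Lean document; each statement's English description precedes it below -/
import Mathlib

section
/- If A is a bounded linear operator on a complex Hilbert space with A² = 0, then w(A) = (1/2)‖A‖. -/
/-!
Write a vector as `x = y + z` with `y ∈ ker A` and `z ⟂ ker A`. Since `A² = 0`, the range of `A`
lies in `ker A`, so `⟨Ax, x⟩ = ⟨Az, y⟩` and `|⟨Ax, x⟩| ≤ ‖A‖ ‖y‖ ‖z‖ ≤ ‖A‖ ‖x‖² / 2`.
Conversely `‖T‖ ≤ 2 w(T)` for every operator `T`: by polarization, `⟨Tx, y⟩` is a combination of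
four values `⟨Tv, v⟩`, and the parallelogram law bounds the sum of the `‖v‖²` by `4 (‖x‖² + ‖y‖²)`.
-/

/-- The numerical radius of a bounded linear operator on a complex Hilbert space:
`w(T) = sup {|⟨Tx, x⟩| : ‖x‖ = 1}`. -/
noncomputable def numRad {H : Type*} [NormedAddCommGroup H] [InnerProductSpace ℂ H]
    (T : H →L[ℂ] H) : ℝ :=
  sSup {r : ℝ | ∃ x : H, ‖x‖ = 1 ∧ r = ‖(inner ℂ (T x) x : ℂ)‖}

/-- The absolute value `|T| = (T*T)^{1/2}` of a bounded operator. -/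
noncomputable def absOp {H : Type*} [NormedAddCommGroup H] [InnerProductSpace ℂ H]
    [CompleteSpace H] (T : H →L[ℂ] H) : H →L[ℂ] H :=
  CFC.sqrt (ContinuousLinearMap.adjoint T * T)

/-- The numerical radius of a complex `n × n` matrix. -/
noncomputable def numRadMat {n : ℕ} (M : Matrix (Fin n) (Fin n) ℂ) : ℝ :=
  numRad (Matrix.toEuclideanCLM (𝕜 := ℂ) M)

open ContinuousLinearMap

open scoped InnerProductSpace

section NumericalRadius

variable {H : Type*} [NormedAddCommGroup H] [InnerProductSpace ℂ H]

lemma numRad_le {T : H →L[ℂ] H} {c : ℝ} (hc : 0 ≤ c)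
    (h : ∀ x, ‖x‖ = 1 → ‖⟪T x, x⟫_ℂ‖ ≤ c) : numRad T ≤ c :=
  Real.sSup_le (by rintro _ ⟨x, hx, rfl⟩; exact h x hx) hc

lemma numRad_nonneg (T : H →L[ℂ] H) : 0 ≤ numRad T :=
  Real.sSup_nonneg (by rintro _ ⟨x, -, rfl⟩; positivity)

lemma norm_inner_apply_self_le_numRad (T : H →L[ℂ] H) {x : H} (hx : ‖x‖ = 1) :
    ‖⟪T x, x⟫_ℂ‖ ≤ numRad T := by
  refine le_csSup ⟨‖T‖, ?_⟩ ⟨x, hx, rfl⟩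
  rintro _ ⟨y, hy, rfl⟩
  calc ‖⟪T y, y⟫_ℂ‖ ≤ ‖T y‖ * ‖y‖ := norm_inner_le_norm _ _
    _ ≤ ‖T‖ * ‖y‖ * ‖y‖ := by gcongr; exact T.le_opNorm y
    _ = ‖T‖ := by rw [hy, mul_one, mul_one]

lemma norm_inner_apply_self_le_numRad_mul (T : H →L[ℂ] H) (x : H) :
    ‖⟪T x, x⟫_ℂ‖ ≤ numRad T * ‖x‖ ^ 2 := by
  rcases eq_or_ne x 0 with rfl | hx
  · simp
  have hunit : ‖(‖x‖ : ℂ)⁻¹ • x‖ = 1 := by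
    rw [norm_smul, norm_inv, Complex.norm_real, norm_norm,
      inv_mul_cancel₀ (norm_ne_zero_iff.mpr hx)]
  have := norm_inner_apply_self_le_numRad T hunit
  rw [map_smul, inner_smul_left, inner_smul_right, norm_mul, norm_mul, Complex.norm_conj,
    norm_inv, Complex.norm_real, norm_norm, ← mul_assoc, ← mul_inv, ← sq] at this
  rwa [inv_mul_le_iff₀ (by positivity), mul_comm] at this

lemma norm_inner_apply_le_numRad_mul (T : H →L[ℂ] H) (x y : H) :
    ‖⟪T x, y⟫_ℂ‖ ≤ numRad T * (‖x‖ ^ 2 + ‖y‖ ^ 2) := by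
  have hw := norm_inner_apply_self_le_numRad_mul T
  have hpar := parallelogram_law_with_norm ℂ (E := H)
  have hIy : ‖Complex.I • y‖ = ‖y‖ := by simp [norm_smul]
  have hsum (a b c d : ℂ) : ‖(a - b - Complex.I * c + Complex.I * d) / 4‖ ≤
      (‖a‖ + ‖b‖ + ‖c‖ + ‖d‖) / 4 := by
    have := norm_sub_le a b
    have := norm_sub_le (a - b) (Complex.I * c)
    have := norm_add_le (a - b - Complex.I * c) (Complex.I * d)
    simp only [norm_mul, Complex.norm_I, one_mul] at *
    rw [norm_div, Complex.norm_ofNat]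
    gcongr
    linarith
  rw [show ⟪T x, y⟫_ℂ = _ from inner_map_polarization' T.toLinearMap x y]
  refine (hsum _ _ _ _).trans ?_
  calc _ ≤ numRad T * ((‖x + y‖ ^ 2 + ‖x - y‖ ^ 2)
          + (‖x + Complex.I • y‖ ^ 2 + ‖x - Complex.I • y‖ ^ 2)) / 4 := by
        simp only [coe_coe]
        have := hw (x + y); have := hw (x - y)
        have := hw (x + Complex.I • y); have := hw (x - Complex.I • y)
        gcongr; linarith
    _ = numRad T * (‖x‖ ^ 2 + ‖y‖ ^ 2) := by rw [hpar, hpar, hIy]; ring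

lemma norm_le_two_mul_numRad (T : H →L[ℂ] H) : ‖T‖ ≤ 2 * numRad T := by
  refine opNorm_le_of_re_inner_le (by linarith [numRad_nonneg T]) fun x y hx hy => ?_
  calc RCLike.re ⟪T x, y⟫_ℂ ≤ ‖⟪T x, y⟫_ℂ‖ := RCLike.re_le_norm _
    _ ≤ numRad T * (‖x‖ ^ 2 + ‖y‖ ^ 2) := norm_inner_apply_le_numRad_mul T x y
    _ = 2 * numRad T := by rw [hx, hy]; ring

lemma norm_inner_apply_self_le_of_mul_self_eq_zero [CompleteSpace H] {A : H →L[ℂ] H}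
    (hA : A * A = 0) (x : H) : ‖⟪A x, x⟫_ℂ‖ ≤ ‖A‖ / 2 * ‖x‖ ^ 2 := by
  set K := A.ker
  have : CompleteSpace K := A.isClosed_ker.completeSpace_coe
  set y := K.starProjection x
  set z := Kᗮ.starProjection x
  have hy : A y = 0 := K.starProjection_apply_mem x
  have hz : z ∈ Kᗮ := Kᗮ.starProjection_apply_mem x
  have hAz : A z ∈ K := DFunLike.congr_fun hA z
  have hinner : ⟪A x, x⟫_ℂ = ⟪A z, y⟫_ℂ := by
    rw [← K.starProjection_add_starProjection_orthogonal x, map_add, hy, zero_add,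
      inner_add_right, Submodule.inner_right_of_mem_orthogonal hAz hz, add_zero]
  have hpyth : ‖x‖ ^ 2 = ‖y‖ ^ 2 + ‖z‖ ^ 2 :=
    Submodule.norm_sq_eq_add_norm_sq_starProjection x K
  calc ‖⟪A x, x⟫_ℂ‖ ≤ ‖A z‖ * ‖y‖ := hinner ▸ norm_inner_le_norm _ _
    _ ≤ ‖A‖ * ‖z‖ * ‖y‖ := by gcongr; exact A.le_opNorm z
    _ ≤ ‖A‖ / 2 * ‖x‖ ^ 2 := by
      rw [hpyth, mul_assoc, mul_comm_div]
      gcongr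
      nlinarith [sq_nonneg (‖y‖ - ‖z‖)]

end NumericalRadius

theorem stmt1 {H : Type*} [NormedAddCommGroup H] [InnerProductSpace ℂ H] [CompleteSpace H]
    (A : H →L[ℂ] H) (hA : A * A = 0) :
    numRad A = (1 / 2) * ‖A‖ := by
  have hle : numRad A ≤ ‖A‖ / 2 := numRad_le (by positivity) fun x hx => by
    simpa [hx] using norm_inner_apply_self_le_of_mul_self_eq_zero hA x
  linarith [norm_le_two_mul_numRad A]
end

section
/- If A = [a_{ij}] and B = [b_{ij}] are n×n complex matrices with 0 ≤ a_{ij} ≤ b_{ij} for all i, j, then w(A) ≤ w(B). -/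
/-!
By the triangle inequality, `|⟨Ax, x⟩| ≤ ∑ᵢⱼ |aᵢⱼ| |xⱼ| |xᵢ| ≤ ∑ᵢⱼ bᵢⱼ |xⱼ| |xᵢ| = ⟨B|x|, |x|⟩`,
where `|x| = (|xᵢ|)ᵢ` is again a unit vector; so every value `|⟨Ax, x⟩|` is bounded by `w(B)`.
-/

section NumRad

variable {H : Type*} [NormedAddCommGroup H] [InnerProductSpace ℂ H]

lemma bddAbove_numRad_set (T : H →L[ℂ] H) :
    BddAbove {r : ℝ | ∃ x : H, ‖x‖ = 1 ∧ r = ‖(inner ℂ (T x) x : ℂ)‖} := by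
  refine ⟨‖T‖, ?_⟩
  rintro r ⟨x, hx, rfl⟩
  calc ‖(inner ℂ (T x) x : ℂ)‖ ≤ ‖T x‖ * ‖x‖ := norm_inner_le_norm _ _
    _ ≤ ‖T‖ * ‖x‖ * ‖x‖ := by gcongr; exact T.le_opNorm x
    _ = ‖T‖ := by rw [hx]; ring

lemma norm_inner_le_numRad (T : H →L[ℂ] H) {x : H} (hx : ‖x‖ = 1) :
    ‖(inner ℂ (T x) x : ℂ)‖ ≤ numRad T :=
  le_csSup (bddAbove_numRad_set T) ⟨x, hx, rfl⟩

lemma numRad_le_numRad_of_forall (S T : H →L[ℂ] H)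
    (h : ∀ x : H, ‖x‖ = 1 → ∃ y : H, ‖y‖ = 1 ∧
      ‖(inner ℂ (S x) x : ℂ)‖ ≤ ‖(inner ℂ (T y) y : ℂ)‖) :
    numRad S ≤ numRad T := by
  refine Real.sSup_le ?_ (Real.sSup_nonneg ?_)
  · rintro r ⟨x, hx, rfl⟩
    obtain ⟨y, hy, hxy⟩ := h x hx
    exact hxy.trans (norm_inner_le_numRad T hy)
  · rintro r ⟨x, -, rfl⟩
    exact norm_nonneg _

end NumRad

section Matrix

variable {𝕜 ι : Type*} [RCLike 𝕜] [Fintype ι]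

noncomputable def EuclideanSpace.abs (x : EuclideanSpace 𝕜 ι) : EuclideanSpace 𝕜 ι :=
  WithLp.toLp 2 fun i => (‖x i‖ : 𝕜)

@[simp]
lemma EuclideanSpace.norm_abs (x : EuclideanSpace 𝕜 ι) : ‖EuclideanSpace.abs x‖ = ‖x‖ := by
  simp [EuclideanSpace.norm_eq, EuclideanSpace.abs]

variable [DecidableEq ι]

lemma inner_toEuclideanCLM_self (M : Matrix ι ι 𝕜) (x : EuclideanSpace 𝕜 ι) :
    (inner 𝕜 (Matrix.toEuclideanCLM (𝕜 := 𝕜) M x) x : 𝕜)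
      = ∑ i, ∑ j, (starRingEnd 𝕜) (M i j * x j) * x i := by
  have : ∀ i, (Matrix.toEuclideanCLM (𝕜 := 𝕜) M x) i = ∑ j, M i j * x j := fun i => rfl
  simp [PiLp.inner_apply, this, RCLike.inner_apply, Finset.mul_sum, mul_comm]

lemma norm_inner_toEuclideanCLM_self_le (M : Matrix ι ι 𝕜) (x : EuclideanSpace 𝕜 ι) :
    ‖(inner 𝕜 (Matrix.toEuclideanCLM (𝕜 := 𝕜) M x) x : 𝕜)‖
      ≤ ∑ i, ∑ j, ‖M i j‖ * ‖x j‖ * ‖x i‖ := by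
  rw [inner_toEuclideanCLM_self]
  refine (norm_sum_le _ _).trans (Finset.sum_le_sum fun i _ => (norm_sum_le _ _).trans_eq ?_)
  simp

lemma inner_toEuclideanCLM_abs_self (M : Matrix ι ι 𝕜) (m : ι → ι → ℝ)
    (hM : ∀ i j, M i j = m i j) (x : EuclideanSpace 𝕜 ι) :
    (inner 𝕜 (Matrix.toEuclideanCLM (𝕜 := 𝕜) M (EuclideanSpace.abs x)) (EuclideanSpace.abs x) : 𝕜)
      = ((∑ i, ∑ j, m i j * ‖x j‖ * ‖x i‖ : ℝ) : 𝕜) := by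
  rw [inner_toEuclideanCLM_self]
  push_cast
  refine Finset.sum_congr rfl fun i _ => Finset.sum_congr rfl fun j _ => ?_
  simp [hM, EuclideanSpace.abs, mul_comm, mul_left_comm]

end Matrix

theorem numRadMat_le_of_norm_le {n : ℕ} (A B : Matrix (Fin n) (Fin n) ℂ) (b : Fin n → Fin n → ℝ)
    (hB : ∀ i j, B i j = b i j) (hAB : ∀ i j, ‖A i j‖ ≤ b i j) :
    numRadMat A ≤ numRadMat B := by
  refine numRad_le_numRad_of_forall _ _ fun x hx => ⟨EuclideanSpace.abs x, by simpa using hx, ?_⟩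
  rw [inner_toEuclideanCLM_abs_self B b hB, RCLike.norm_ofReal]
  calc ‖(inner ℂ (Matrix.toEuclideanCLM (𝕜 := ℂ) A x) x : ℂ)‖
      ≤ ∑ i, ∑ j, ‖A i j‖ * ‖x j‖ * ‖x i‖ := norm_inner_toEuclideanCLM_self_le A x
    _ ≤ ∑ i, ∑ j, b i j * ‖x j‖ * ‖x i‖ := by gcongr with i _ j _; exact hAB i j
    _ ≤ |∑ i, ∑ j, b i j * ‖x j‖ * ‖x i‖| := le_abs_self _

open ContinuousLinearMap
theorem stmt8 {n : ℕ} (A B : Matrix (Fin n) (Fin n) ℂ)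
    (h : ∀ i j, ∃ a b : ℝ, 0 ≤ a ∧ a ≤ b ∧ A i j = (a : ℂ) ∧ B i j = (b : ℂ)) :
    numRadMat A ≤ numRadMat B := by
  choose a b ha hab hA hB using h
  refine numRadMat_le_of_norm_le A B b hB fun i j => ?_
  rw [hA, Complex.norm_real, Real.norm_of_nonneg (ha i j)]
  exact hab i j
end

section
/- If A is a bounded linear operator and U a unitary operator on a complex Hilbert space H, then w(AU ± U*A) ≤ min{‖|A|² + I‖, ‖|A*|² + I‖}, and also w(AU ± U*A) ≤ (1/2)‖|A| + I‖ · ‖|A*| + I‖. -/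
open ContinuousLinearMap

lemma numRad_le_norm {H : Type*} [NormedAddCommGroup H] [InnerProductSpace ℂ H]
    (T : H →L[ℂ] H) : numRad T ≤ ‖T‖ := by
  refine Real.sSup_le ?_ (norm_nonneg T)
  rintro _ ⟨x, hx, rfl⟩
  calc ‖inner ℂ (T x) x‖ ≤ ‖T x‖ * ‖x‖ := norm_inner_le_norm _ _
    _ ≤ ‖T‖ * ‖x‖ * ‖x‖ := by gcongr; exact T.le_opNorm x
    _ = ‖T‖ := by rw [hx, mul_one, mul_one]

namespace CStarRing

variable {E : Type*} [NormedRing E] [StarRing E] [CStarRing E]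

lemma norm_mul_add_star_mul_le (a : E) {u : E} (hu : u ∈ unitary E) :
    ‖a * u + star u * a‖ ≤ 2 * ‖a‖ := by
  calc ‖a * u + star u * a‖ ≤ ‖a * u‖ + ‖star u * a‖ := norm_add_le _ _
    _ = 2 * ‖a‖ := by
      rw [norm_mul_mem_unitary a hu,
        norm_mem_unitary_mul a (Unitary.star_mem hu), two_mul]

lemma norm_mul_sub_star_mul_le (a : E) {u : E} (hu : u ∈ unitary E) :
    ‖a * u - star u * a‖ ≤ 2 * ‖a‖ := by
  calc ‖a * u - star u * a‖ ≤ ‖a * u‖ + ‖star u * a‖ := norm_sub_le _ _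
    _ = 2 * ‖a‖ := by
      rw [norm_mul_mem_unitary a hu,
        norm_mem_unitary_mul a (Unitary.star_mem hu), two_mul]

end CStarRing

namespace CStarAlgebra

variable {E : Type*} [CStarAlgebra E] [PartialOrder E] [StarOrderedRing E]

lemma norm_add_one_of_nonneg [Nontrivial E] {p : E} (hp : 0 ≤ p) : ‖p + 1‖ = ‖p‖ + 1 := by
  refine le_antisymm ((norm_add_le p 1).trans_eq (by rw [norm_one])) ?_
  have hspec : ‖p‖ + 1 ∈ spectrum ℝ (p + algebraMap ℝ E 1) := by
    rw [← spectrum.add_singleton_eq]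
    exact Set.add_mem_add (norm_mem_spectrum_of_nonneg hp) rfl
  simpa [abs_of_nonneg (by positivity : (0 : ℝ) ≤ ‖p‖ + 1)] using
    spectrum.norm_le_norm_of_mem hspec

lemma two_mul_norm_le_norm_abs_sq_add_one (a : E) : 2 * ‖a‖ ≤ ‖CFC.abs a ^ 2 + 1‖ := by
  rcases subsingleton_or_nontrivial E with _ | _
  · simp [Subsingleton.elim a 0]
  rw [CFC.abs_sq, norm_add_one_of_nonneg (star_mul_self_nonneg a), CStarRing.norm_star_mul_self]
  nlinarith [sq_nonneg (‖a‖ - 1)]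

lemma four_mul_norm_le_norm_abs_add_one_mul (a : E) :
    4 * ‖a‖ ≤ ‖CFC.abs a + 1‖ * ‖CFC.abs (star a) + 1‖ := by
  rcases subsingleton_or_nontrivial E with _ | _
  · simp only [Subsingleton.elim a 0, norm_zero, mul_zero]
    positivity
  rw [norm_add_one_of_nonneg (CFC.abs_nonneg a), norm_add_one_of_nonneg (CFC.abs_nonneg _),
    CFC.norm_abs, CFC.norm_abs, norm_star]
  nlinarith [sq_nonneg (‖a‖ - 1)]

end CStarAlgebra

theorem stmt18 {H : Type*} [NormedAddCommGroup H] [InnerProductSpace ℂ H] [CompleteSpace H]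
    (A U : H →L[ℂ] H) (hU : U ∈ unitary (H →L[ℂ] H)) :
    numRad (A * U + adjoint U * A) ≤
      min ‖absOp A ^ 2 + 1‖ ‖absOp (adjoint A) ^ 2 + 1‖ ∧
    numRad (A * U - adjoint U * A) ≤
      min ‖absOp A ^ 2 + 1‖ ‖absOp (adjoint A) ^ 2 + 1‖ ∧
    numRad (A * U + adjoint U * A) ≤
      (1 / 2) * (‖absOp A + 1‖ * ‖absOp (adjoint A) + 1‖) ∧
    numRad (A * U - adjoint U * A) ≤
      (1 / 2) * (‖absOp A + 1‖ * ‖absOp (adjoint A) + 1‖) := by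
  have hadd : numRad (A * U + adjoint U * A) ≤ 2 * ‖A‖ :=
    (numRad_le_norm _).trans (CStarRing.norm_mul_add_star_mul_le A hU)
  have hsub : numRad (A * U - adjoint U * A) ≤ 2 * ‖A‖ :=
    (numRad_le_norm _).trans (CStarRing.norm_mul_sub_star_mul_le A hU)
  -- `absOp T` is definitionally `CFC.abs T`, and `adjoint` is the `star` of `H →L[ℂ] H`.
  have hA : 2 * ‖A‖ ≤ ‖absOp A ^ 2 + 1‖ := CStarAlgebra.two_mul_norm_le_norm_abs_sq_add_one A
  have hA' : 2 * ‖A‖ ≤ ‖absOp (adjoint A) ^ 2 + 1‖ :=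
    norm_star A ▸ CStarAlgebra.two_mul_norm_le_norm_abs_sq_add_one (star A)
  have hprod : 4 * ‖A‖ ≤ ‖absOp A + 1‖ * ‖absOp (adjoint A) + 1‖ :=
    CStarAlgebra.four_mul_norm_le_norm_abs_add_one_mul A
  refine ⟨hadd.trans (le_min hA hA'), hsub.trans (le_min hA hA'), ?_, ?_⟩ <;> linarith
end
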